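/- arXiv:2601.11730 — 2 statements merged into one kernel-verified Lean document; each statement's English description precedes it below -/
import Mathlib

section
/- Let d ≥ 2 be an integer, λ ∈ ℂ, and let f₊, f₋ : (−1,1) → ℂ be differentiable. Define φ₊(θ) = cos(θ/2) · f₊(cos θ) and φ₋(θ) = sin(θ/2) · f₋(cos θ) for θ ∈ (0,π). Then (φ₊, φ₋) satisfies the zonal Dirac eigenvalue system with eigenvalue λ if and only if (f₊, f₋) satisfies the Jacobi-type first-order system with parameter λ. -/
/-!
Put `z = cos θ`. The half-angle identities `1 + cos θ = 2 cos² (θ/2)`, `1 - cos θ = 2 sin² (θ/2)`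
and `sin θ = 2 sin (θ/2) cos (θ/2)` turn `cot θ + csc θ` into `cot (θ/2)` and `cot θ - csc θ`
into `-tan (θ/2)`, and the chain rule through `z = cos θ` then shows that the two Dirac equations
are `cos (θ/2)` and `-sin (θ/2)` times the two Jacobi equations at `z`. Both factors are nonzero
on `(0, π)`, which `cos` maps bijectively onto `(-1, 1)`.
-/

/-- `(φ₊, φ₋)` satisfies the zonal Dirac eigenvalue system with eigenvalue `λ`:
for all `θ ∈ (0, π)`,
`φ₋'(θ) + ((d−1)/2)(cot θ + 1/sin θ) φ₋(θ) = λ φ₊(θ)` and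
`φ₊'(θ) + ((d−1)/2)(cot θ − 1/sin θ) φ₊(θ) = −λ φ₋(θ)`. -/
def ZonalDiracSystem (d : ℕ) (lam : ℂ) (φp φm : ℝ → ℂ) : Prop :=
  ∀ θ ∈ Set.Ioo (0 : ℝ) Real.pi,
    deriv φm θ + ((d : ℂ) - 1) / 2
        * ((Real.cos θ / Real.sin θ + 1 / Real.sin θ : ℝ) : ℂ) * φm θ = lam * φp θ ∧
    deriv φp θ + ((d : ℂ) - 1) / 2
        * ((Real.cos θ / Real.sin θ - 1 / Real.sin θ : ℝ) : ℂ) * φp θ = -lam * φm θ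

/-- `(f₊, f₋)` satisfies the Jacobi-type first-order system with parameter `λ`:
for all `z ∈ (−1,1)`, `(z−1)f₋'(z) + (d/2)f₋(z) = λ f₊(z)` and
`(z+1)f₊'(z) + (d/2)f₊(z) = λ f₋(z)`. -/
def JacobiSystem (d : ℕ) (lam : ℂ) (fp fm : ℝ → ℂ) : Prop :=
  ∀ z ∈ Set.Ioo (-1 : ℝ) 1,
    ((z : ℂ) - 1) * deriv fm z + (d : ℂ) / 2 * fm z = lam * fp z ∧
    ((z : ℂ) + 1) * deriv fp z + (d : ℂ) / 2 * fp z = lam * fm z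

open Real

section HalfAngle

variable (θ : ℝ)

lemma sin_eq_two_mul_sin_half_mul_cos_half : sin θ = 2 * sin (θ / 2) * cos (θ / 2) := by
  rw [← sin_two_mul, mul_div_cancel₀ θ two_ne_zero]

lemma cos_eq_two_mul_cos_half_sq_sub_one : cos θ = 2 * cos (θ / 2) ^ 2 - 1 := by
  rw [← cos_two_mul, mul_div_cancel₀ θ two_ne_zero]

lemma cos_eq_one_sub_two_mul_sin_half_sq : cos θ = 1 - 2 * sin (θ / 2) ^ 2 := by
  rw [cos_eq_two_mul_cos_half_sq_sub_one, cos_sq']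
  ring

variable {θ}

lemma cos_div_sin_add_one_div_sin (hs : sin (θ / 2) ≠ 0) :
    cos θ / sin θ + 1 / sin θ = cos (θ / 2) / sin (θ / 2) := by
  rw [← add_div, cos_eq_two_mul_cos_half_sq_sub_one θ, sin_eq_two_mul_sin_half_mul_cos_half θ]
  rcases eq_or_ne (cos (θ / 2)) 0 with hc | hc
  · simp [hc]
  · field_simp
    ring

lemma cos_div_sin_sub_one_div_sin (hc : cos (θ / 2) ≠ 0) :
    cos θ / sin θ - 1 / sin θ = -(sin (θ / 2) / cos (θ / 2)) := by
  rw [← sub_div, cos_eq_one_sub_two_mul_sin_half_sq θ, sin_eq_two_mul_sin_half_mul_cos_half θ]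
  rcases eq_or_ne (sin (θ / 2)) 0 with hs | hs
  · simp [hs]
  · field_simp
    ring

end HalfAngle

lemma bijOn_cos_Ioo : Set.BijOn cos (Set.Ioo 0 π) (Set.Ioo (-1) 1) :=
  cosPartialHomeomorph.bijOn

section ZonalSpinor

variable {θ : ℝ} {f : ℝ → ℂ}

lemma hasDerivAt_ofReal_mul_comp_cos {g : ℝ → ℝ} {g' : ℝ} {f' : ℂ} (hg : HasDerivAt g g' θ)
    (hf : HasDerivAt f f' (cos θ)) :
    HasDerivAt (fun t => (g t : ℂ) * f (cos t)) (g' * f (cos θ) - g θ * sin θ * f') θ := by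
  refine (hg.ofReal_comp.mul (hf.scomp θ (hasDerivAt_cos θ))).congr_deriv ?_
  simp only [Function.comp_apply, Complex.real_smul, Complex.ofReal_neg]
  ring

lemma hasDerivAt_comp_half {g : ℝ → ℝ} {g' : ℝ} (hg : HasDerivAt g g' (θ / 2)) :
    HasDerivAt (fun t => g (t / 2)) (g' / 2) θ :=
  (hg.comp θ ((hasDerivAt_id θ).div_const 2)).congr_deriv (by ring)

lemma deriv_sin_half_mul_comp_cos_add (d : ℂ) (hs : sin (θ / 2) ≠ 0)
    (hf : DifferentiableAt ℝ f (cos θ)) :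
    deriv (fun t => (sin (t / 2) : ℂ) * f (cos t)) θ
        + (d - 1) / 2 * ((cos θ / sin θ + 1 / sin θ : ℝ) : ℂ) * ((sin (θ / 2) : ℂ) * f (cos θ))
      = cos (θ / 2) * ((cos θ - 1) * deriv f (cos θ) + d / 2 * f (cos θ)) := by
  have hcos : (cos θ : ℂ) - 1 = -2 * sin (θ / 2) ^ 2 := by
    rw [cos_eq_one_sub_two_mul_sin_half_sq θ]; push_cast; ring
  rw [(hasDerivAt_ofReal_mul_comp_cos (hasDerivAt_comp_half (hasDerivAt_sin _))
      hf.hasDerivAt).deriv, cos_div_sin_add_one_div_sin hs, hcos,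
    sin_eq_two_mul_sin_half_mul_cos_half θ]
  have hs_ℂ : (sin (θ / 2) : ℂ) ≠ 0 := Complex.ofReal_ne_zero.mpr hs
  simp only [Complex.ofReal_div, Complex.ofReal_mul, Complex.ofReal_ofNat]
  field_simp
  ring

lemma deriv_cos_half_mul_comp_cos_add (d : ℂ) (hc : cos (θ / 2) ≠ 0)
    (hf : DifferentiableAt ℝ f (cos θ)) :
    deriv (fun t => (cos (t / 2) : ℂ) * f (cos t)) θ
        + (d - 1) / 2 * ((cos θ / sin θ - 1 / sin θ : ℝ) : ℂ) * ((cos (θ / 2) : ℂ) * f (cos θ))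
      = -(sin (θ / 2) * ((cos θ + 1) * deriv f (cos θ) + d / 2 * f (cos θ))) := by
  have hcos : (cos θ : ℂ) + 1 = 2 * cos (θ / 2) ^ 2 := by
    rw [cos_eq_two_mul_cos_half_sq_sub_one θ]; push_cast; ring
  rw [(hasDerivAt_ofReal_mul_comp_cos (hasDerivAt_comp_half (hasDerivAt_cos _))
      hf.hasDerivAt).deriv, cos_div_sin_sub_one_div_sin hc, hcos,
    sin_eq_two_mul_sin_half_mul_cos_half θ]
  have hc_ℂ : (cos (θ / 2) : ℂ) ≠ 0 := Complex.ofReal_ne_zero.mpr hc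
  simp only [Complex.ofReal_div, Complex.ofReal_mul, Complex.ofReal_neg, Complex.ofReal_ofNat]
  field_simp
  ring

end ZonalSpinor

theorem zonalDiracSystem_iff_jacobiSystem_general (d : ℕ) (lam : ℂ) (fp fm : ℝ → ℂ)
    (hfp : ∀ z ∈ Set.Ioo (-1 : ℝ) 1, DifferentiableAt ℝ fp z)
    (hfm : ∀ z ∈ Set.Ioo (-1 : ℝ) 1, DifferentiableAt ℝ fm z) :
    ZonalDiracSystem d lam
        (fun θ => (Real.cos (θ / 2) : ℂ) * fp (Real.cos θ))
        (fun θ => (Real.sin (θ / 2) : ℂ) * fm (Real.cos θ))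
      ↔ JacobiSystem d lam fp fm := by
  rw [JacobiSystem, bijOn_cos_Ioo.forall]
  refine forall₂_congr fun θ hθ => ?_
  have hz := mapsTo_cos_Ioo hθ
  have hs : sin (θ / 2) ≠ 0 :=
    (sin_pos_of_pos_of_lt_pi (half_pos hθ.1) (by linarith [hθ.2, pi_pos])).ne'
  have hc : cos (θ / 2) ≠ 0 :=
    (cos_pos_of_mem_Ioo ⟨by linarith [hθ.1, pi_pos], by linarith [hθ.2]⟩).ne'
  rw [deriv_sin_half_mul_comp_cos_add _ hs (hfm _ hz),
    deriv_cos_half_mul_comp_cos_add _ hc (hfp _ hz), mul_left_comm lam, neg_mul,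
    mul_left_comm lam, neg_inj, mul_right_inj' (Complex.ofReal_ne_zero.mpr hc),
    mul_right_inj' (Complex.ofReal_ne_zero.mpr hs)]

/-- Let `d ≥ 2`, `λ ∈ ℂ`, and `f₊, f₋` differentiable on `(−1,1)`. Define
`φ₊(θ) = cos(θ/2) f₊(cos θ)` and `φ₋(θ) = sin(θ/2) f₋(cos θ)`. Then `(φ₊, φ₋)` satisfies the
zonal Dirac eigenvalue system with eigenvalue `λ` iff `(f₊, f₋)` satisfies the Jacobi-type
first-order system with parameter `λ`. -/
theorem zonalDiracSystem_iff_jacobiSystem (d : ℕ) (hd : 2 ≤ d) (lam : ℂ) (fp fm : ℝ → ℂ)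
    (hfp : ∀ z ∈ Set.Ioo (-1 : ℝ) 1, DifferentiableAt ℝ fp z)
    (hfm : ∀ z ∈ Set.Ioo (-1 : ℝ) 1, DifferentiableAt ℝ fm z) :
    ZonalDiracSystem d lam
        (fun θ => (Real.cos (θ / 2) : ℂ) * fp (Real.cos θ))
        (fun θ => (Real.sin (θ / 2) : ℂ) * fm (Real.cos θ))
      ↔ JacobiSystem d lam fp fm :=
  zonalDiracSystem_iff_jacobiSystem_general d lam fp fm hfp hfm
end

section
/- Let (Ω, F, P) be a probability space, and let a, b, c, C, C₀ be positive real numbers with b > a/2. Let (X_N)_{N≥1} be a sequence of real-valued random variables such that: (i) for every N ≥ 1, X_N ≥ −C₀ N^a almost surely; (ii) for all integers 1 ≤ M ≤ N and all λ > 0, P(|X_N − X_M| > λ) ≤ C · exp(−c · M^b · λ^{1/2}). Then for every real r ≥ 1, sup_{N≥1} E[exp(−r X_N)] < ∞. -/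
/-!
For `t ≥ 2C₀` take `M = ⌊(t / 2C₀)^{1/a}⌋`, so that `X_M ≥ -C₀ M^a ≥ -t/2` almost surely. If
`M ≤ N`, the event `X_N < -t` forces `|X_N - X_M| > t/2`, which has probability at most
`C exp(-c M^b (t/2)^{1/2}) ≤ C exp(-c' t^θ)` with `θ = b/a + 1/2 > 1`; if `N < M`, the lower bound
on `X_N` already excludes it. Since `θ > 1`, this tail eventually beats `exp(-(r+1)t)` uniformly in
`N`, and cutting `-X_N` into the layers `k + j < -X_N ≤ k + j + 1` bounds `E[exp(-r X_N)]` by a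
geometric series.
-/

open MeasureTheory Filter Real
open scoped ENNReal

lemma Nat.half_le_floor {K : Type*} [Field K] [LinearOrder K] [IsStrictOrderedRing K]
    [FloorSemiring K] {s : K} (hs : 1 ≤ s) : s / 2 ≤ ⌊s⌋₊ := by
  have h1 : (1 : K) ≤ ⌊s⌋₊ := by exact_mod_cast Nat.le_floor (by exact_mod_cast hs)
  linarith [Nat.lt_floor_add_one s]

lemma eventually_mul_le_mul_rpow {θ c : ℝ} (hθ : 1 < θ) (hc : 0 < c) (L : ℝ) :
    ∀ᶠ x in atTop, L * x ≤ c * x ^ θ := by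
  filter_upwards [(tendsto_rpow_atTop (sub_pos.2 hθ)).eventually_ge_atTop (L / c),
    eventually_gt_atTop 0] with x hx hx0
  calc L * x ≤ c * x ^ (θ - 1) * x := by gcongr; exact (div_le_iff₀' hc).1 hx
    _ = c * x ^ θ := by rw [mul_assoc, ← rpow_add_one hx0.ne', sub_add_cancel]

lemma rpow_add_div_le_rpow_mul_rpow {a b p K t m : ℝ} (hb : 0 ≤ b) (hK : 0 < K) (ht : 0 < t)
    (hm : (t / K) ^ a⁻¹ / 2 ≤ m) :
    t ^ (b / a + p) / (2 ^ b * K ^ (b / a) * 2 ^ p) ≤ m ^ b * (t / 2) ^ p := by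
  calc t ^ (b / a + p) / (2 ^ b * K ^ (b / a) * 2 ^ p)
      = ((t / K) ^ a⁻¹ / 2) ^ b * (t / 2) ^ p := by
        rw [div_rpow (by positivity) zero_le_two, ← rpow_mul (by positivity),
          div_rpow ht.le hK.le, div_rpow ht.le zero_le_two, rpow_add ht, inv_mul_eq_div]
        field_simp
    _ ≤ m ^ b * (t / 2) ^ p := by gcongr

section Measure

variable {Ω : Type*} [MeasurableSpace Ω] {P : Measure Ω}

lemma measure_lt_neg_eq_zero {Y : Ω → ℝ} {K t : ℝ} (hY : ∀ᵐ ω ∂P, K ≤ Y ω) (hKt : -K ≤ t) :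
    P {ω | t < -Y ω} = 0 :=
  measure_eq_zero_iff_ae_notMem.2 (hY.mono fun ω hYω (hω : t < -Y ω) ↦ by linarith)

lemma measure_lt_neg_le_measure_lt_abs_sub {Y Z : Ω → ℝ} {K t : ℝ}
    (hZ : ∀ᵐ ω ∂P, K ≤ Z ω) (hKt : -K ≤ t / 2) :
    P {ω | t < -Y ω} ≤ P {ω | t / 2 < |Y ω - Z ω|} :=
  measure_mono_ae (hZ.mono fun ω hZω (hω : t < -Y ω) ↦
    show t / 2 < |Y ω - Z ω| from (by linarith : t / 2 < -(Y ω - Z ω)).trans_le (neg_le_abs _))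

end Measure

lemma ofReal_exp_le_add_tsum_indicator {r : ℝ} (hr : 0 ≤ r) (k y : ℝ) :
    ENNReal.ofReal (exp (r * y)) ≤ ENNReal.ofReal (exp (r * k)) +
      ∑' j : ℕ,
        {t : ℝ | k + j < t}.indicator (fun _ ↦ ENNReal.ofReal (exp (r * (k + j + 1)))) y := by
  rcases le_or_gt y k with hyk | hky
  · exact le_add_right (by gcongr)
  · set j := ⌈y - k⌉₊ - 1
    have hj : (j : ℝ) = ⌈y - k⌉₊ - 1 := Nat.cast_pred (Nat.ceil_pos.2 (sub_pos.2 hky))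
    have hlt : k + j < y := by linarith [Nat.ceil_lt_add_one (sub_pos.2 hky).le]
    have hle : y ≤ k + j + 1 := by linarith [Nat.le_ceil (y - k)]
    calc ENNReal.ofReal (exp (r * y)) ≤ ENNReal.ofReal (exp (r * (k + j + 1))) := by gcongr
      _ = {t : ℝ | k + j < t}.indicator (fun _ ↦ ENNReal.ofReal (exp (r * (k + j + 1)))) y :=
        by rw [Set.indicator_of_mem (s := {t : ℝ | k + j < t}) hlt]
      _ ≤ ∑' i : ℕ, {t : ℝ | k + i < t}.indicator
            (fun _ ↦ ENNReal.ofReal (exp (r * (k + i + 1)))) y := ENNReal.le_tsum j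
      _ ≤ _ := le_add_self

section Probability

variable {Ω : Type*} [MeasurableSpace Ω] (P : Measure Ω) [IsProbabilityMeasure P]

lemma lintegral_exp_le_add_tsum {Y : Ω → ℝ} (hY : Measurable Y) {r : ℝ} (hr : 0 ≤ r) (k : ℝ) :
    ∫⁻ ω, ENNReal.ofReal (exp (r * Y ω)) ∂P ≤ ENNReal.ofReal (exp (r * k)) +
      ∑' j : ℕ, ENNReal.ofReal (exp (r * (k + j + 1))) * P {ω | k + j < Y ω} := by
  have hS (j : ℕ) : MeasurableSet {ω | k + j < Y ω} := measurableSet_lt measurable_const hY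
  calc ∫⁻ ω, ENNReal.ofReal (exp (r * Y ω)) ∂P
      ≤ ∫⁻ ω, (ENNReal.ofReal (exp (r * k)) + ∑' j : ℕ, {ω | k + j < Y ω}.indicator
            (fun _ ↦ ENNReal.ofReal (exp (r * (k + j + 1)))) ω) ∂P :=
        lintegral_mono fun ω ↦ ofReal_exp_le_add_tsum_indicator hr k (Y ω)
    _ = _ := by
        rw [lintegral_add_left measurable_const, lintegral_const, measure_univ, mul_one,
          lintegral_tsum fun j ↦ (measurable_const.indicator (hS j)).aemeasurable]
        simp only [lintegral_indicator_const (hS _)]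

lemma lintegral_exp_le_of_exp_tail {Y : Ω → ℝ} (hY : Measurable Y) {r k C : ℝ} (hr : 0 ≤ r)
    (hk : 0 ≤ k) (hC : 0 ≤ C)
    (htail : ∀ t, k ≤ t → P {ω | t < Y ω} ≤ ENNReal.ofReal (C * exp (-((r + 1) * t)))) :
    ∫⁻ ω, ENNReal.ofReal (exp (r * Y ω)) ∂P ≤
      ENNReal.ofReal (exp (r * k) + C * exp r * (1 - exp (-1))⁻¹) := by
  have hq : exp (-1) < 1 := exp_lt_one_iff.2 (by norm_num)
  have hterm (j : ℕ) : ENNReal.ofReal (exp (r * (k + j + 1))) * P {ω | k + j < Y ω} ≤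
      ENNReal.ofReal (C * exp r * exp (-1) ^ j) := by
    calc ENNReal.ofReal (exp (r * (k + j + 1))) * P {ω | k + j < Y ω}
        ≤ ENNReal.ofReal (exp (r * (k + j + 1))) *
            ENNReal.ofReal (C * exp (-((r + 1) * (k + j)))) := by
          gcongr; exact htail _ (by linarith [j.cast_nonneg (α := ℝ)])
      _ = ENNReal.ofReal (C * exp (r - k - j)) := by
          rw [← ENNReal.ofReal_mul (exp_pos _).le, mul_left_comm, ← exp_add]
          ring_nf
      _ ≤ ENNReal.ofReal (C * exp r * exp (-1) ^ j) := by
          rw [← exp_nat_mul, mul_assoc, ← exp_add]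
          gcongr
          linarith
  have hgeom : HasSum (fun j : ℕ ↦ C * exp r * exp (-1) ^ j) (C * exp r * (1 - exp (-1))⁻¹) :=
    (hasSum_geometric_of_lt_one (exp_pos _).le hq).mul_left _
  calc ∫⁻ ω, ENNReal.ofReal (exp (r * Y ω)) ∂P
      ≤ ENNReal.ofReal (exp (r * k)) +
          ∑' j : ℕ, ENNReal.ofReal (exp (r * (k + j + 1))) * P {ω | k + j < Y ω} :=
        lintegral_exp_le_add_tsum P hY hr k
    _ ≤ ENNReal.ofReal (exp (r * k)) + ∑' j : ℕ, ENNReal.ofReal (C * exp r * exp (-1) ^ j) := by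
        gcongr with j; exact hterm j
    _ = ENNReal.ofReal (exp (r * k) + C * exp r * (1 - exp (-1))⁻¹) := by
        rw [← ENNReal.ofReal_tsum_of_nonneg (fun j ↦ by positivity) hgeom.summable, hgeom.tsum_eq,
          ENNReal.ofReal_add (exp_pos _).le (hgeom.nonneg fun j ↦ by positivity)]

end Probability

lemma exists_uniform_rpow_tail {Ω : Type*} [MeasurableSpace Ω] (P : Measure Ω)
    {a b c C C₀ : ℝ} (ha : 0 < a) (hc : 0 < c) (hC : 0 ≤ C) (hC₀ : 0 < C₀) (hab : a / 2 < b)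
    {X : ℕ → Ω → ℝ} (hlow : ∀ N : ℕ, 1 ≤ N → ∀ᵐ ω ∂P, -C₀ * (N : ℝ) ^ a ≤ X N ω)
    (htail : ∀ M N : ℕ, 1 ≤ M → M ≤ N → ∀ t : ℝ, 0 < t →
        P {ω | t < |X N ω - X M ω|}
          ≤ ENNReal.ofReal (C * exp (-c * (M : ℝ) ^ b * t ^ ((1 : ℝ) / 2)))) :
    ∃ c' : ℝ, 0 < c' ∧ ∃ θ : ℝ, 1 < θ ∧ ∃ A : ℝ, ∀ N : ℕ, 1 ≤ N → ∀ t, A ≤ t →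
      P {ω | t < -X N ω} ≤ ENNReal.ofReal (C * exp (-(c' * t ^ θ))) := by
  have hb : 0 < b := by linarith
  refine ⟨c / (2 ^ b * (2 * C₀) ^ (b / a) * 2 ^ (1 / 2 : ℝ)), by positivity, b / a + 1 / 2,
    by linarith [(lt_div_iff₀ ha).2 (by linarith : 1 / 2 * a < b)], 2 * C₀, fun N hN t ht ↦ ?_⟩
  have ht0 : 0 < t := by linarith
  set s := (t / (2 * C₀)) ^ a⁻¹
  set M := ⌊s⌋₊
  have hs : 1 ≤ s := one_le_rpow ((one_le_div (by positivity)).2 ht) (inv_nonneg.2 ha.le)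
  have hM : 1 ≤ M := Nat.le_floor (by exact_mod_cast hs)
  have hMa : C₀ * (M : ℝ) ^ a ≤ t / 2 := by
    have : (M : ℝ) ^ a ≤ t / (2 * C₀) := by
      calc (M : ℝ) ^ a ≤ s ^ a := by gcongr; exact Nat.floor_le (by positivity)
        _ = t / (2 * C₀) := by rw [← rpow_mul (by positivity), inv_mul_cancel₀ ha.ne', rpow_one]
    rw [le_div_iff₀ (by positivity)] at this
    linarith
  rcases le_or_gt M N with hMN | hNM
  · calc P {ω | t < -X N ω} ≤ P {ω | t / 2 < |X N ω - X M ω|} :=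
          measure_lt_neg_le_measure_lt_abs_sub (hlow M hM) (by linarith)
      _ ≤ ENNReal.ofReal (C * exp (-c * (M : ℝ) ^ b * (t / 2) ^ ((1 : ℝ) / 2))) :=
          htail M N hM hMN _ (by positivity)
      _ ≤ ENNReal.ofReal (C * exp (-(c / (2 ^ b * (2 * C₀) ^ (b / a) * 2 ^ (1 / 2 : ℝ)) *
            t ^ (b / a + 1 / 2)))) := by
          have hMs : s / 2 ≤ M := Nat.half_le_floor hs
          have := rpow_add_div_le_rpow_mul_rpow (p := 1 / 2) hb.le (by positivity) ht0 hMs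
          gcongr
          rw [neg_mul, neg_mul, neg_le_neg_iff]
          convert mul_le_mul_of_nonneg_left this hc.le using 1 <;> ring
  · have hNa : C₀ * (N : ℝ) ^ a ≤ t := by
      have : (N : ℝ) ^ a ≤ (M : ℝ) ^ a := by gcongr
      nlinarith
    exact (measure_lt_neg_eq_zero (hlow N hN) (by linarith)).trans_le zero_le

theorem uniform_exponential_moment_bound_general {Ω : Type*} [MeasurableSpace Ω] (P : Measure Ω)
    [IsProbabilityMeasure P] (a b c C C₀ : ℝ)
    (ha : 0 < a) (hc : 0 < c) (hC : 0 < C) (hC₀ : 0 < C₀) (hab : a / 2 < b)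
    (X : ℕ → Ω → ℝ) (hX : ∀ N, Measurable (X N))
    (hlow : ∀ N : ℕ, 1 ≤ N → ∀ᵐ ω ∂P, -C₀ * (N : ℝ) ^ a ≤ X N ω)
    (htail : ∀ M N : ℕ, 1 ≤ M → M ≤ N → ∀ t : ℝ, 0 < t →
        P {ω | t < |X N ω - X M ω|}
          ≤ ENNReal.ofReal (C * Real.exp (-c * (M : ℝ) ^ b * t ^ ((1 : ℝ) / 2)))) :
    ∀ r : ℝ, 1 ≤ r → ∃ B : ENNReal, B ≠ ⊤ ∧
      ∀ N : ℕ, 1 ≤ N → ∫⁻ ω, ENNReal.ofReal (Real.exp (-r * X N ω)) ∂P ≤ B := by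
  intro r hr
  obtain ⟨c', hc', θ, hθ, A, hXtail⟩ :=
    exists_uniform_rpow_tail P ha hc hC.le hC₀ hab hlow htail
  obtain ⟨k, hk⟩ := eventually_atTop.1 <| (eventually_mul_le_mul_rpow hθ hc' (r + 1)).and <|
    (eventually_ge_atTop A).and (eventually_ge_atTop 0)
  refine ⟨ENNReal.ofReal (exp (r * k) + C * exp r * (1 - exp (-1))⁻¹), ENNReal.ofReal_ne_top,
    fun N hN ↦ ?_⟩
  simp_rw [neg_mul_comm r]
  refine lintegral_exp_le_of_exp_tail P (hX N).neg (by linarith) (hk k le_rfl).2.2 hC.le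
    fun t ht ↦ ?_
  obtain ⟨hgrow, hA, -⟩ := hk t ht
  calc P {ω | t < -X N ω} ≤ ENNReal.ofReal (C * exp (-(c' * t ^ θ))) := hXtail N hN t hA
    _ ≤ ENNReal.ofReal (C * exp (-((r + 1) * t))) := by gcongr

/-- Let `a, b, c, C, C₀ > 0` with `b > a/2`, and `(X_N)_{N ≥ 1}` real random variables with
`X_N ≥ −C₀ N^a` a.s. and `P(|X_N − X_M| > t) ≤ C exp(−c M^b t^{1/2})` for `1 ≤ M ≤ N`,
`t > 0`. Then for every `r ≥ 1`, `sup_{N ≥ 1} E[exp(−r X_N)] < ∞`. -/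
theorem uniform_exponential_moment_bound {Ω : Type*} [MeasurableSpace Ω] (P : Measure Ω)
    [IsProbabilityMeasure P] (a b c C C₀ : ℝ)
    (ha : 0 < a) (hb : 0 < b) (hc : 0 < c) (hC : 0 < C) (hC₀ : 0 < C₀) (hab : a / 2 < b)
    (X : ℕ → Ω → ℝ) (hX : ∀ N, Measurable (X N))
    (hlow : ∀ N : ℕ, 1 ≤ N → ∀ᵐ ω ∂P, -C₀ * (N : ℝ) ^ a ≤ X N ω)
    (htail : ∀ M N : ℕ, 1 ≤ M → M ≤ N → ∀ t : ℝ, 0 < t →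
        P {ω | t < |X N ω - X M ω|}
          ≤ ENNReal.ofReal (C * Real.exp (-c * (M : ℝ) ^ b * t ^ ((1 : ℝ) / 2)))) :
    ∀ r : ℝ, 1 ≤ r → ∃ B : ENNReal, B ≠ ⊤ ∧
      ∀ N : ℕ, 1 ≤ N → ∫⁻ ω, ENNReal.ofReal (Real.exp (-r * X N ω)) ∂P ≤ B :=
  uniform_exponential_moment_bound_general P a b c C C₀ ha hc hC hC₀ hab X hX hlow htail
end
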